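/- Key Lemma: Let r ≥ 3 and let H be an r-uniform hypergraph on n vertices with edges e₁, …, e_m such that (i) every copy of K_r minus an edge (K_r^−) in the 2-skeleton G of H is contained in some edge of H, and (ii) there are 2-element sets f_i ⊆ e_i such that f_i ⊆ e_j if and only if (i = m = j) or (i < m and j ∈ {i, i+1}). Then the K_r-bootstrap process on Kₙ starting from G − {f₁, …, f_m} runs for at least m steps; in particular M_r(n) ≥ m. -/
import Mathlib

/-- One step of the `K_r`-bootstrap process. -/
def krStep (r : ℕ) {V : Type*} (G : SimpleGraph V) : SimpleGraph V :=
  SimpleGraph.fromRel (fun u v => G.Adj u v ∨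
    ∃ s : Finset V, u ∈ s ∧ v ∈ s ∧ s.card = r ∧
      ∀ a ∈ s, ∀ b ∈ s, a ≠ b → ¬(a = u ∧ b = v) → ¬(a = v ∧ b = u) → G.Adj a b)

/-- `M_r(n)`, the maximum running time of the `K_r`-bootstrap process on `n` vertices. -/
noncomputable def maxRunTime (r n : ℕ) : ℕ :=
  sSup {t : ℕ | ∃ G₀ : SimpleGraph (Fin n), (krStep r)^[t] G₀ ≠ (krStep r)^[t - 1] G₀}

/-- The 2-skeleton of a hypergraph given by its edges `e i`. -/
def skeleton {n m : ℕ} (e : Fin m → Finset (Fin n)) : SimpleGraph (Fin n) :=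
  SimpleGraph.fromRel (fun u v => ∃ i, u ∈ e i ∧ v ∈ e i)

lemma krStep_adj (r : ℕ) {V : Type*} (G : SimpleGraph V) (u v : V) :
    (krStep r G).Adj u v ↔ u ≠ v ∧ (G.Adj u v ∨
      ∃ s : Finset V, u ∈ s ∧ v ∈ s ∧ s.card = r ∧
        ∀ a ∈ s, ∀ b ∈ s, a ≠ b → ¬(a = u ∧ b = v) → ¬(a = v ∧ b = u) → G.Adj a b) := by
  rw [krStep, SimpleGraph.fromRel_adj]
  constructor
  · rintro ⟨hne, h | h⟩
    · exact ⟨hne, h⟩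
    · rcases h with h | ⟨s, hv, hu, hc, hall⟩
      · exact ⟨hne, Or.inl h.symm⟩
      · exact ⟨hne, Or.inr ⟨s, hu, hv, hc,
          fun a ha b hb hab h1 h2 => hall a ha b hb hab h2 h1⟩⟩
  · rintro ⟨hne, h⟩
    exact ⟨hne, Or.inl h⟩

lemma skeleton_adj {n m : ℕ} (e : Fin m → Finset (Fin n)) (u v : Fin n) :
    (skeleton e).Adj u v ↔ u ≠ v ∧ ∃ i, u ∈ e i ∧ v ∈ e i := by
  rw [skeleton, SimpleGraph.fromRel_adj]
  constructor
  · rintro ⟨hne, ⟨i, h1, h2⟩ | ⟨i, h1, h2⟩⟩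
    exacts [⟨hne, i, h1, h2⟩, ⟨hne, i, h2, h1⟩]
  · rintro ⟨hne, i, h1, h2⟩
    exact ⟨hne, Or.inl ⟨i, h1, h2⟩⟩

/-- The graph of forbidden pairs with index at least `t`. -/
def Fgr {n m : ℕ} (f : Fin m → Finset (Fin n)) (t : ℕ) : SimpleGraph (Fin n) :=
  SimpleGraph.fromRel (fun u v => ∃ i : Fin m, t ≤ (i : ℕ) ∧ u ∈ f i ∧ v ∈ f i)

lemma Fgr_adj {n m : ℕ} (f : Fin m → Finset (Fin n)) (t : ℕ) (u v : Fin n) :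
    (Fgr f t).Adj u v ↔ u ≠ v ∧ ∃ i : Fin m, t ≤ (i : ℕ) ∧ u ∈ f i ∧ v ∈ f i := by
  rw [Fgr, SimpleGraph.fromRel_adj]
  constructor
  · rintro ⟨hne, ⟨i, ht, h1, h2⟩ | ⟨i, ht, h1, h2⟩⟩
    exacts [⟨hne, i, ht, h1, h2⟩, ⟨hne, i, ht, h2, h1⟩]
  · rintro ⟨hne, i, ht, h1, h2⟩
    exact ⟨hne, Or.inl ⟨i, ht, h1, h2⟩⟩

section Key

variable {r n m : ℕ} (e f : Fin m → Finset (Fin n))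

lemma f_inj (hf2 : ∀ i, (f i).card = 2)
    (hff : ∀ i j : Fin m, f i ⊆ e j ↔ (j = i ∨ (j : ℕ) = (i : ℕ) + 1))
    {i j : Fin m} (h : f i = f j) : i = j := by
  have h1 : f i ⊆ e j := h ▸ ((hff j j).mpr (Or.inl rfl))
  have h2 : f j ⊆ e i := h ▸ ((hff i i).mpr (Or.inl rfl))
  rcases (hff i j).mp h1 with hij | hij
  · exact hij.symm
  · rcases (hff j i).mp h2 with hji | hji
    · exact hji
    · omega

lemma f_pair (hf2 : ∀ i, (f i).card = 2) {i : Fin m} {u v : Fin n}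
    (hne : u ≠ v) (hu : u ∈ f i) (hv : v ∈ f i) : f i = {u, v} := by
  have : ({u, v} : Finset (Fin n)) ⊆ f i := by
    intro x hx
    simp only [Finset.mem_insert, Finset.mem_singleton] at hx
    rcases hx with rfl | rfl <;> assumption
  refine (Finset.eq_of_subset_of_card_le this ?_).symm
  rw [hf2 i, Finset.card_insert_of_notMem (by simpa using hne), Finset.card_singleton]

lemma key_step (hr : 3 ≤ r)
    (hcard : ∀ i, (e i).card = r)
    (hf2 : ∀ i, (f i).card = 2)
    (hKrMinusFree : ∀ s : Finset (Fin n), s.card = r →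
      ∀ a ∈ s, ∀ b ∈ s, a ≠ b →
        (∀ u ∈ s, ∀ v ∈ s, u ≠ v → ¬(u = a ∧ v = b) → ¬(u = b ∧ v = a) →
          (skeleton e).Adj u v) →
        ∃ j, s ⊆ e j)
    (hff : ∀ i j : Fin m, f i ⊆ e j ↔ (j = i ∨ (j : ℕ) = (i : ℕ) + 1))
    {t : ℕ} (ht : t < m) :
    krStep r (skeleton e \ Fgr f t) = skeleton e \ Fgr f (t + 1) := by
  ext u v
  simp only [krStep_adj, SimpleGraph.sdiff_adj, skeleton_adj, Fgr_adj]
  constructor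
  · rintro ⟨hne, h | ⟨s, hu, hv, hc, hall⟩⟩
    · -- already present
      refine ⟨h.1, fun hF => h.2 ⟨hne, ?_⟩⟩
      obtain ⟨_, i, hti, h1, h2⟩ := hF
      exact ⟨i, by omega, h1, h2⟩
    · -- newly infected via s
      have hskel : ∀ a ∈ s, ∀ b ∈ s, a ≠ b → ¬(a = u ∧ b = v) → ¬(a = v ∧ b = u) →
          (skeleton e).Adj a b := fun a ha b hb hab h1 h2 =>
        (skeleton_adj e a b).mpr (hall a ha b hb hab h1 h2).1
      obtain ⟨j, hsj⟩ := hKrMinusFree s hc u hu v hv hne hskel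
      have hs : s = e j := Finset.eq_of_subset_of_card_le hsj (by rw [hcard j, hc])
      refine ⟨⟨hne, j, hs ▸ hu, hs ▸ hv⟩, ?_⟩
      rintro ⟨-, i, hti, hu', hv'⟩
      have hfi : f i = {u, v} := f_pair f hf2 hne hu' hv'
      have hfie : f i ⊆ e j := hfi ▸ (by
        intro x hx
        simp only [Finset.mem_insert, Finset.mem_singleton] at hx
        rcases hx with rfl | rfl
        exacts [hs ▸ hu, hs ▸ hv])
      -- find another missing pair f k inside e j, contradiction
      obtain ⟨k, htk, hke, hki⟩ : ∃ k : Fin m, t ≤ (k : ℕ) ∧ f k ⊆ e j ∧ k ≠ i := by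
        rcases (hff i j).mp hfie with hji | hji
        · -- j = i
          have hjv : (j : ℕ) = (i : ℕ) := by rw [hji]
          refine ⟨⟨(i : ℕ) - 1, by omega⟩, show t ≤ (i : ℕ) - 1 by omega, ?_, ?_⟩
          · exact (hff _ j).mpr (Or.inr (show (j : ℕ) = (i : ℕ) - 1 + 1 by omega))
          · exact Fin.ne_of_val_ne (show (i : ℕ) - 1 ≠ (i : ℕ) by omega)
        · refine ⟨j, by omega, (hff j j).mpr (Or.inl rfl), ?_⟩
          exact Fin.ne_of_val_ne (by omega)
      obtain ⟨a, b, hab, hfk⟩ := Finset.card_eq_two.mp (hf2 k)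
      have hane : f k ≠ f i := fun h => hki (f_inj e f hf2 hff h)
      have ha : a ∈ e j := hke (hfk ▸ by simp)
      have hb : b ∈ e j := hke (hfk ▸ by simp)
      have hnuv1 : ¬(a = u ∧ b = v) := by
        rintro ⟨rfl, rfl⟩; exact hane (hfk.trans hfi.symm)
      have hnuv2 : ¬(a = v ∧ b = u) := by
        rintro ⟨rfl, rfl⟩
        refine hane (hfk.trans ?_)
        rw [hfi, Finset.pair_comm]
      have hadj := hall a (hs ▸ ha) b (hs ▸ hb) hab hnuv1 hnuv2
      exact hadj.2 ⟨hab, k, htk, hfk ▸ by simp, hfk ▸ by simp⟩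
  · rintro ⟨⟨hne, hi⟩, hF⟩
    by_cases hFt : (Fgr f t).Adj u v
    · -- u v is the pair f t, infected this round via e t
      rw [Fgr_adj] at hFt
      obtain ⟨-, i, hti, hu, hv⟩ := hFt
      have hit : (i : ℕ) = t := by
        by_contra h
        exact hF ⟨hne, i, by omega, hu, hv⟩
      have hfi : f i = {u, v} := f_pair f hf2 hne hu hv
      have hfe : f i ⊆ e i := (hff i i).mpr (Or.inl rfl)
      refine ⟨hne, Or.inr ⟨e i, hfe (hfi ▸ by simp), hfe (hfi ▸ by simp), hcard i,
        ?_⟩⟩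
      intro a ha b hb hab h1 h2
      refine ⟨⟨hab, i, ha, hb⟩, ?_⟩
      rintro ⟨-, k, htk, ha', hb'⟩
      have hfk : f k = {a, b} := f_pair f hf2 hab ha' hb'
      have hke : f k ⊆ e i := hfk ▸ (by
        intro x hx
        simp only [Finset.mem_insert, Finset.mem_singleton] at hx
        rcases hx with rfl | rfl <;> assumption)
      rcases (hff k i).mp hke with hik | hik
      · -- k = i, so {a,b} = {u,v}
        have hset : ({a, b} : Finset (Fin n)) = {u, v} := by
          rw [← hfk, ← hik, hfi]
        have ha2 : a = u ∨ a = v := by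
          have : a ∈ ({u, v} : Finset (Fin n)) := hset ▸ by simp
          simpa using this
        have hb2 : b = u ∨ b = v := by
          have : b ∈ ({u, v} : Finset (Fin n)) := hset ▸ by simp
          simpa using this
        rcases ha2 with rfl | rfl <;> rcases hb2 with rfl | rfl
        · exact hab rfl
        · exact h1 ⟨rfl, rfl⟩
        · exact h2 ⟨rfl, rfl⟩
        · exact hab rfl
      · omega
    · refine ⟨hne, Or.inl ⟨⟨hne, hi⟩, fun hh => hFt ((Fgr_adj f t u v).mpr hh)⟩⟩

end Key

lemma le_krStep (r : ℕ) {V : Type*} (G : SimpleGraph V) : G ≤ krStep r G := by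
  intro u v h
  exact (krStep_adj r G u v).mpr ⟨G.ne_of_adj h, Or.inl h⟩

theorem stmt_6 (r n m : ℕ) (hr : 3 ≤ r) (hm : 1 ≤ m)
    (e f : Fin m → Finset (Fin n))
    (hcard : ∀ i, (e i).card = r)
    (hf2 : ∀ i, (f i).card = 2)
    -- (i) every copy of `K_r^-` in the 2-skeleton is contained in some hyperedge
    (hKrMinusFree : ∀ s : Finset (Fin n), s.card = r →
      ∀ a ∈ s, ∀ b ∈ s, a ≠ b →
        (∀ u ∈ s, ∀ v ∈ s, u ≠ v → ¬(u = a ∧ v = b) → ¬(u = b ∧ v = a) →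
          (skeleton e).Adj u v) →
        ∃ j, s ⊆ e j)
    -- (ii) `f i ⊆ e j` iff `j = i` or `j = i + 1` (0-indexed version of the condition)
    (hff : ∀ i j : Fin m, f i ⊆ e j ↔ (j = i ∨ (j : ℕ) = (i : ℕ) + 1)) :
    (∀ t < m,
      (krStep r)^[t + 1]
          (skeleton e \ SimpleGraph.fromRel (fun u v => ∃ i, u ∈ f i ∧ v ∈ f i)) ≠
        (krStep r)^[t]
          (skeleton e \ SimpleGraph.fromRel (fun u v => ∃ i, u ∈ f i ∧ v ∈ f i))) ∧
    m ≤ maxRunTime r n := by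
  set G₀ : SimpleGraph (Fin n) :=
    skeleton e \ SimpleGraph.fromRel (fun u v => ∃ i, u ∈ f i ∧ v ∈ f i) with hG₀
  have hG0 : G₀ = skeleton e \ Fgr f 0 := by
    rw [hG₀]
    congr 1
    ext u v
    rw [SimpleGraph.fromRel_adj, Fgr_adj]
    constructor
    · rintro ⟨hne, ⟨i, h1, h2⟩ | ⟨i, h1, h2⟩⟩
      exacts [⟨hne, i, Nat.zero_le _, h1, h2⟩, ⟨hne, i, Nat.zero_le _, h2, h1⟩]
    · rintro ⟨hne, i, -, h1, h2⟩
      exact ⟨hne, Or.inl ⟨i, h1, h2⟩⟩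
  have hiter : ∀ t ≤ m, (krStep r)^[t] G₀ = skeleton e \ Fgr f t := by
    intro t
    induction t with
    | zero => intro _; simpa using hG0
    | succ t ih =>
      intro h
      rw [Function.iterate_succ_apply', ih (by omega),
        key_step e f hr hcard hf2 hKrMinusFree hff (by omega : t < m)]
  have hneq : ∀ t < m, skeleton e \ Fgr f t ≠ skeleton e \ Fgr f (t + 1) := by
    intro t ht h
    set i : Fin m := ⟨t, ht⟩ with hi
    obtain ⟨u, v, huv, hfi⟩ := Finset.card_eq_two.mp (hf2 i)
    have hu : u ∈ f i := hfi ▸ by simp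
    have hv : v ∈ f i := hfi ▸ by simp
    have hfe : f i ⊆ e i := (hff i i).mpr (Or.inl rfl)
    have hadj2 : (skeleton e \ Fgr f (t + 1)).Adj u v := by
      rw [SimpleGraph.sdiff_adj, skeleton_adj, Fgr_adj]
      refine ⟨⟨huv, i, hfe hu, hfe hv⟩, ?_⟩
      rintro ⟨-, k, htk, hu', hv'⟩
      have : f k = f i := (f_pair f hf2 huv hu' hv').trans hfi.symm
      have := f_inj e f hf2 hff this
      subst this
      simp [hi] at htk
    have hadj1 : ¬(skeleton e \ Fgr f t).Adj u v := by
      rw [SimpleGraph.sdiff_adj, Fgr_adj]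
      rintro ⟨-, hn⟩
      exact hn ⟨huv, i, by simp [hi], hu, hv⟩
    rw [h] at hadj1
    exact hadj1 hadj2
  have hmain : ∀ t < m, (krStep r)^[t + 1] G₀ ≠ (krStep r)^[t] G₀ := by
    intro t ht h
    rw [hiter (t + 1) (by omega), hiter t (by omega)] at h
    exact hneq t ht h.symm
  refine ⟨hmain, ?_⟩
  -- m is in the set
  have hmem : m ∈ {t : ℕ | ∃ G : SimpleGraph (Fin n),
      (krStep r)^[t] G ≠ (krStep r)^[t - 1] G} := by
    refine ⟨G₀, ?_⟩
    have : m - 1 + 1 = m := by omega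
    rw [← this]
    exact hmain (m - 1) (by omega)
  -- the set is bounded above
  have hbdd : BddAbove {t : ℕ | ∃ G : SimpleGraph (Fin n),
      (krStep r)^[t] G ≠ (krStep r)^[t - 1] G} := by
    refine ⟨Fintype.card (SimpleGraph (Fin n)), ?_⟩
    rintro t ⟨G, hG⟩
    by_contra hlt
    push_neg at hlt
    -- iterates are monotone
    have hmono : ∀ a b : ℕ, a ≤ b → (krStep r)^[a] G ≤ (krStep r)^[b] G := by
      intro a b hab
      induction b with
      | zero => simp_all
      | succ b ih =>
        rcases Nat.lt_or_ge a (b + 1) with h | h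
        · refine le_trans (ih (by omega)) ?_
          rw [Function.iterate_succ_apply']
          exact le_krStep r _
        · have : a = b + 1 := by omega
          subst this; exact le_rfl
    -- if two iterates coincide, the chain is constant afterwards
    have hstab : ∀ s, (krStep r)^[s + 1] G = (krStep r)^[s] G →
        ∀ k, (krStep r)^[s + k] G = (krStep r)^[s] G := by
      intro s hs k
      induction k with
      | zero => rfl
      | succ k ih =>
        rw [show s + (k + 1) = (s + k) + 1 from rfl, Function.iterate_succ_apply', ih]
        exact (Function.iterate_succ_apply' (krStep r) s G).symm.trans hs
    have hstrict : ∀ s < t, (krStep r)^[s] G ≠ (krStep r)^[s + 1] G := by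
      intro s hs hcontra
      have h1 : (krStep r)^[t] G = (krStep r)^[s] G := by
        have := hstab s hcontra.symm (t - s)
        rwa [show s + (t - s) = t by omega] at this
      have h2 : (krStep r)^[t - 1] G = (krStep r)^[s] G := by
        have := hstab s hcontra.symm (t - 1 - s)
        rwa [show s + (t - 1 - s) = t - 1 by omega] at this
      exact hG (h1.trans h2.symm)
    -- the map s ↦ iterate s is injective on range (t+1)
    have hkey : ∀ a b : ℕ, a < b → b ≤ t → (krStep r)^[a] G ≠ (krStep r)^[b] G := by
      intro a b h1 h2 heq
      have ha1 : (krStep r)^[a] G ≤ (krStep r)^[a + 1] G := hmono a (a + 1) (by omega)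
      have ha2 : (krStep r)^[a + 1] G ≤ (krStep r)^[b] G := hmono (a + 1) b (by omega)
      have : (krStep r)^[a] G = (krStep r)^[a + 1] G :=
        le_antisymm ha1 (heq ▸ ha2)
      exact hstrict a (by omega) this
    have hinj : Set.InjOn (fun s => (krStep r)^[s] G) (Finset.range (t + 1)) := by
      intro a ha b hb hab
      simp only [Finset.coe_range, Set.mem_Iio] at ha hb
      have hab' : (krStep r)^[a] G = (krStep r)^[b] G := hab
      rcases lt_trichotomy a b with h | h | h
      · exact absurd hab' (hkey a b h (by omega))
      · exact h
      · exact absurd hab'.symm (hkey b a h (by omega))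
    have := Finset.card_le_card_of_injOn (fun s => (krStep r)^[s] G)
      (fun x _ => Finset.mem_univ _) hinj
    simp only [Finset.card_range, Finset.card_univ] at this
    omega
  exact le_csSup hbdd hmem
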